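/- arXiv:2403.16734 — 5 statements merged into one kernel-verified Lean document; each statement's English description precedes it below -/
import Mathlib

section
/- Let J ∈ ℝ^{n×n} be invertible, b ∈ ℝⁿ, F(x) = Jx − b, and let B_0 ∈ ℝ^{n×n} be invertible. Generate x_{k+1} = x_k − B_k⁻¹ F(x_k) (each B_k assumed invertible), with s_k a standard basis vector maximizing ‖(B_k − J) e_i‖ over e_1, …, e_n, and B_{k+1} = AAA(B_k, J, s_k). Then for every k ≥ 0, ‖B_k − J‖_F² ≤ max{1 − k/n, 0} · ‖B_0 − J‖_F². Moreover, if k* is the first index such that (B_{k*} − J) s_{k*} = 0, then B_{k*} = J and F(x_{k*+1}) = 0. -/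
/-!
Write `R = B - J`. The AAA step replaces `R` by `(I - P) R`, where `P` is the orthogonal projection
onto `u = R s`; with `s = eᵢ` this annihilates column `i`, keeps every zero column zero, and removes
at least `‖u‖²` from `‖R‖_F²` (the `i`-th column alone loses `‖u‖²`). After `t` steps at most
`n - t` columns are nonzero, and since `s` picks the longest column, `‖R‖_F² ≤ (n - t) ‖u‖²`.
Hence `‖R_{t+1}‖_F² ≤ (1 - 1/(n - t)) ‖R_t‖_F²`, which telescopes to the factor `1 - k/n`.
Once `R s = 0` for the longest column, `R = 0`, so `B = J` and the next Newton step is exact.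
-/

open Matrix MeasureTheory ProbabilityTheory Finset

/-- Euclidean norm of a vector in ℝⁿ. -/
noncomputable def enorm' {n : ℕ} (v : Fin n → ℝ) : ℝ := Real.sqrt (∑ i, (v i) ^ 2)

/-- Frobenius norm of a real n×n matrix. -/
noncomputable def frob {n : ℕ} (A : Matrix (Fin n) (Fin n) ℝ) : ℝ :=
  Real.sqrt (∑ i, ∑ j, (A i j) ^ 2)

/-- Spectral (ℓ₂ operator) norm of a real n×n matrix. -/
noncomputable def opNorm' {n : ℕ} (A : Matrix (Fin n) (Fin n) ℝ) : ℝ :=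
  ‖Matrix.toEuclideanCLM (𝕜 := ℝ) A‖

/-- The AAA update: AAA(B,J,s) = B + ((J−B) s sᵀ (J−B)ᵀ / (sᵀ(J−B)ᵀ(J−B)s)) (J−B)
if (J−B)s ≠ 0, and B otherwise. -/
noncomputable def AAAupd {n : ℕ} (B J : Matrix (Fin n) (Fin n) ℝ) (s : Fin n → ℝ) :
    Matrix (Fin n) (Fin n) ℝ :=
  if (J - B).mulVec s = 0 then B
  else B + (((J - B).mulVec s) ⬝ᵥ ((J - B).mulVec s))⁻¹ •
      (Matrix.vecMulVec ((J - B).mulVec s) ((J - B).mulVec s) * (J - B))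

/-- `s` is a standard basis vector maximizing ‖R e_i‖ over the standard basis. -/
noncomputable def IsGreedy {n : ℕ} (R : Matrix (Fin n) (Fin n) ℝ) (s : Fin n → ℝ) : Prop :=
  ∃ i : Fin n, s = Pi.single i 1 ∧
    ∀ j : Fin n, enorm' (R.mulVec (Pi.single j 1)) ≤ enorm' (R.mulVec (Pi.single i 1))

/-- `P` is the orthogonal-projection matrix onto the subspace `V` of ℝⁿ
(symmetric, idempotent, range `V`, identity on `V`). -/
def IsOrthProj {n : ℕ} (P : Matrix (Fin n) (Fin n) ℝ) (V : Submodule ℝ (Fin n → ℝ)) : Prop :=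
  P.IsSymm ∧ P * P = P ∧ (∀ v, P.mulVec v ∈ V) ∧ (∀ v ∈ V, P.mulVec v = v)

/-- Standard Gaussian measure on ℝⁿ: the n-fold product of N(0,1). -/
noncomputable def stdGaussianPi (n : ℕ) : MeasureTheory.Measure (Fin n → ℝ) :=
  MeasureTheory.Measure.pi fun _ => ProbabilityTheory.gaussianReal 0 1

lemma enorm'_sq {n : ℕ} (v : Fin n → ℝ) : enorm' v ^ 2 = v ⬝ᵥ v := by
  rw [enorm', Real.sq_sqrt (by positivity)]
  simp only [dotProduct, sq]

lemma frob_sq_eq_sum_enorm'_sq {n : ℕ} (A : Matrix (Fin n) (Fin n) ℝ) :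
    frob A ^ 2 = ∑ j, enorm' (A *ᵥ Pi.single j 1) ^ 2 := by
  simp_rw [enorm'_sq, mulVec_single_one]
  rw [frob, Real.sq_sqrt (by positivity), Finset.sum_comm]
  simp only [dotProduct, col_apply, sq]

section RejectAlong

variable {m ι : Type*} [Fintype m] [Fintype ι]

/-- `(I - u uᵀ / uᵀu) R`; since `0⁻¹ = 0`, `rejectAlong 0 R = R`. -/
noncomputable def rejectAlong (u : m → ℝ) (R : Matrix m ι ℝ) : Matrix m ι ℝ :=
  R - (u ⬝ᵥ u)⁻¹ • (vecMulVec u u * R)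

lemma dotProduct_self_sub_proj (c u : m → ℝ) :
    (c - ((u ⬝ᵥ c) / (u ⬝ᵥ u)) • u) ⬝ᵥ (c - ((u ⬝ᵥ c) / (u ⬝ᵥ u)) • u)
      = c ⬝ᵥ c - (u ⬝ᵥ c) ^ 2 / (u ⬝ᵥ u) := by
  rw [sub_dotProduct]
  simp only [dotProduct_sub, smul_dotProduct, dotProduct_smul, smul_eq_mul,
    dotProduct_comm c u]
  by_cases hu : u ⬝ᵥ u = 0
  · simp [hu]
  · field_simp
    ring

lemma rejectAlong_mulVec (u : m → ℝ) (R : Matrix m ι ℝ) (v : ι → ℝ) :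
    rejectAlong u R *ᵥ v = R *ᵥ v - ((u ⬝ᵥ R *ᵥ v) / (u ⬝ᵥ u)) • u := by
  rw [rejectAlong, sub_mulVec, smul_mulVec, ← mulVec_mulVec, vecMulVec_mulVec]
  ext
  simp only [Pi.sub_apply, Pi.smul_apply, MulOpposite.smul_eq_mul_unop, smul_eq_mul,
    MulOpposite.unop_op]
  ring

lemma rejectAlong_mulVec_eq_zero {R : Matrix m ι ℝ} {v : ι → ℝ} (hv : R *ᵥ v = 0)
    (u : m → ℝ) : rejectAlong u R *ᵥ v = 0 := by
  simp [rejectAlong_mulVec, hv]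

lemma rejectAlong_mulVec_self (R : Matrix m ι ℝ) (v : ι → ℝ) :
    rejectAlong (R *ᵥ v) R *ᵥ v = 0 := by
  rw [rejectAlong_mulVec]
  by_cases hu : R *ᵥ v = 0
  · simp [hu]
  · rw [div_self (dotProduct_self_eq_zero.not.mpr hu), one_smul, sub_self]

end RejectAlong

lemma frob_rejectAlong_sq_le {n : ℕ} (R : Matrix (Fin n) (Fin n) ℝ) (i : Fin n) :
    frob (rejectAlong (R *ᵥ Pi.single i 1) R) ^ 2
      ≤ frob R ^ 2 - enorm' (R *ᵥ Pi.single i 1) ^ 2 := by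
  set u := R *ᵥ Pi.single i 1
  have hcols : frob (rejectAlong u R) ^ 2
      = frob R ^ 2 - ∑ j, (u ⬝ᵥ R *ᵥ Pi.single j 1) ^ 2 / (u ⬝ᵥ u) := by
    simp only [frob_sq_eq_sum_enorm'_sq, enorm'_sq, rejectAlong_mulVec,
      dotProduct_self_sub_proj, Finset.sum_sub_distrib]
  have hcol_i : (u ⬝ᵥ u) ^ 2 / (u ⬝ᵥ u) ≤ ∑ j, (u ⬝ᵥ R *ᵥ Pi.single j 1) ^ 2 / (u ⬝ᵥ u) :=
    Finset.single_le_sum (f := fun j => (u ⬝ᵥ R *ᵥ Pi.single j 1) ^ 2 / (u ⬝ᵥ u))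
      (fun j _ => div_nonneg (sq_nonneg _) (dotProduct_self_star_nonneg u)) (Finset.mem_univ i)
  rw [sq, mul_self_div_self] at hcol_i
  rw [hcols, enorm'_sq]
  linarith

lemma AAAupd_sub {n : ℕ} (B J : Matrix (Fin n) (Fin n) ℝ) (s : Fin n → ℝ) :
    AAAupd B J s - J = rejectAlong ((B - J) *ᵥ s) (B - J) := by
  have hJB : J - B = -(B - J) := (neg_sub B J).symm
  rw [AAAupd, rejectAlong, hJB]
  simp only [neg_mulVec, neg_eq_zero]
  split_ifs with hu
  · simp [hu]
  · simp only [vecMulVec_neg, neg_vecMulVec, neg_neg, dotProduct_neg, neg_dotProduct,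
      Matrix.mul_neg, smul_neg]
    abel

section Greedy

variable {n : ℕ}

noncomputable def nonzeroCols (R : Matrix (Fin n) (Fin n) ℝ) : Finset (Fin n) :=
  {j | R *ᵥ Pi.single j 1 ≠ 0}

lemma IsGreedy.eq_zero_of_mulVec_eq_zero {R : Matrix (Fin n) (Fin n) ℝ} {s : Fin n → ℝ}
    (hg : IsGreedy R s) (hs : R *ᵥ s = 0) : R = 0 := by
  obtain ⟨i, rfl, hmax⟩ := hg
  ext a j
  have hj : enorm' (R *ᵥ Pi.single j 1) = 0 := by
    have h0 : enorm' (0 : Fin n → ℝ) = 0 := by simp [enorm']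
    exact ((hmax j).trans_eq (by rw [hs, h0])).antisymm (Real.sqrt_nonneg _)
  rw [← sq_eq_zero_iff, enorm'_sq, dotProduct_self_eq_zero] at hj
  simpa [mulVec_single_one] using congrFun hj a

lemma IsGreedy.frob_sq_le {R : Matrix (Fin n) (Fin n) ℝ} {s : Fin n → ℝ} (hg : IsGreedy R s) :
    frob R ^ 2 ≤ #(nonzeroCols R) * enorm' (R *ᵥ s) ^ 2 := by
  obtain ⟨i, rfl, hmax⟩ := hg
  have hzero : ∀ j ∈ univ, enorm' (R *ᵥ Pi.single j 1) ^ 2 ≠ 0 → R *ᵥ Pi.single j 1 ≠ 0 := by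
    intro j _ hj
    simpa [enorm'_sq] using hj
  rw [frob_sq_eq_sum_enorm'_sq, ← Finset.sum_filter_of_ne hzero, ← nsmul_eq_mul]
  exact Finset.sum_le_card_nsmul _ _ _ fun j _ =>
    pow_le_pow_left₀ (Real.sqrt_nonneg _) (hmax j) 2

lemma IsGreedy.card_nonzeroCols_rejectAlong_le {R : Matrix (Fin n) (Fin n) ℝ} {s : Fin n → ℝ}
    (hg : IsGreedy R s) : #(nonzeroCols (rejectAlong (R *ᵥ s) R)) ≤ #(nonzeroCols R) - 1 := by
  by_cases hs : R *ᵥ s = 0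
  · simp only [hg.eq_zero_of_mulVec_eq_zero hs, rejectAlong, nonzeroCols, zero_mulVec,
      Matrix.mul_zero, smul_zero, sub_zero, ne_eq, not_true_eq_false]
    simp
  obtain ⟨i, rfl, -⟩ := hg
  have hsub : nonzeroCols (rejectAlong (R *ᵥ Pi.single i 1) R) ⊆ (nonzeroCols R).erase i := by
    intro j hj
    simp only [nonzeroCols, Finset.mem_filter, Finset.mem_univ, true_and,
      Finset.mem_erase] at hj ⊢
    refine ⟨?_, fun hR => hj (rejectAlong_mulVec_eq_zero hR _)⟩
    rintro rfl
    exact hj (rejectAlong_mulVec_self R _)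
  have hi : i ∈ nonzeroCols R := by simpa [nonzeroCols] using hs
  exact (Finset.card_le_card hsub).trans_eq (Finset.card_erase_of_mem hi)

end Greedy

lemma natCast_mul_le_of_descent {F e : ℕ → ℝ} {n : ℕ} (he : ∀ t, 0 ≤ e t)
    (hdesc : ∀ t, F (t + 1) ≤ F t - e t) (hcols : ∀ t, F t ≤ ((n - t : ℕ) : ℝ) * e t) (k : ℕ) :
    n * F k ≤ ((n - k : ℕ) : ℝ) * F 0 := by
  induction k with
  | zero => simp
  | succ k ih =>
    rcases le_or_gt n k with hk | hk
    · have hFk : F k ≤ 0 := by simpa [Nat.sub_eq_zero_of_le hk] using hcols k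
      rw [Nat.sub_eq_zero_of_le (by omega), Nat.cast_zero, zero_mul]
      exact mul_nonpos_of_nonneg_of_nonpos (Nat.cast_nonneg n) (by linarith [hdesc k, he k])
    · have hd : ((n - (k + 1) : ℕ) : ℝ) = ((n - k : ℕ) : ℝ) - 1 := by
        rw [Nat.cast_sub hk, Nat.cast_sub hk.le]; push_cast; ring
      have hd1 : (1 : ℝ) ≤ ((n - k : ℕ) : ℝ) := by exact_mod_cast (by omega : 1 ≤ n - k)
      set d : ℝ := ((n - k : ℕ) : ℝ)
      rw [hd]
      have hFk : F k ≤ d * e k := hcols k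
      have : d * (n * F (k + 1)) ≤ d * ((d - 1) * F 0) := calc
        d * (n * F (k + 1)) = n * (d * F (k + 1)) := by ring
        _ ≤ n * (d * F k - F k) := by
          gcongr
          nlinarith [hdesc k]
        _ = (d - 1) * (n * F k) := by ring
        _ ≤ (d - 1) * (d * F 0) := by gcongr
        _ = d * ((d - 1) * F 0) := by ring
      exact le_of_mul_le_mul_left this (by linarith)

lemma le_max_one_sub_div_mul_of_descent {F e : ℕ → ℝ} {n : ℕ} (hn : 0 < n) (he : ∀ t, 0 ≤ e t)
    (hdesc : ∀ t, F (t + 1) ≤ F t - e t) (hcols : ∀ t, F t ≤ ((n - t : ℕ) : ℝ) * e t) (k : ℕ) :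
    F k ≤ max (1 - (k : ℝ) / n) 0 * F 0 := by
  have hbound := natCast_mul_le_of_descent he hdesc hcols k
  have hn' : (0 : ℝ) < n := Nat.cast_pos.mpr hn
  rcases le_or_gt k n with hk | hk
  · have hk' : (k : ℝ) ≤ n := by exact_mod_cast hk
    rw [max_eq_left (by rw [sub_nonneg, div_le_one hn']; exact hk'),
      show (1 - (k : ℝ) / n) * F 0 = ((n : ℝ) - k) * F 0 / n by field_simp, le_div_iff₀ hn']
    rw [Nat.cast_sub hk] at hbound
    linarith
  · rw [Nat.sub_eq_zero_of_le hk.le, Nat.cast_zero, zero_mul] at hbound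
    rw [max_eq_right (by rw [sub_nonpos, one_le_div hn']; exact_mod_cast hk.le), zero_mul]
    exact nonpos_of_mul_nonpos_right (by linarith) hn'

theorem stmt_3_general {n : ℕ} (hn : 0 < n)
    (J : Matrix (Fin n) (Fin n) ℝ) (hJ : IsUnit J) (b : Fin n → ℝ)
    (B0 : Matrix (Fin n) (Fin n) ℝ)
    (x : ℕ → Fin n → ℝ) (B : ℕ → Matrix (Fin n) (Fin n) ℝ) (s : ℕ → Fin n → ℝ)
    (hB0 : B 0 = B0)
    (hx : ∀ t, x (t + 1) = x t - (B t)⁻¹.mulVec (J.mulVec (x t) - b))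
    (hgreedy : ∀ t, IsGreedy (B t - J) (s t))
    (hBup : ∀ t, B (t + 1) = AAAupd (B t) J (s t)) :
    (∀ k : ℕ, frob (B k - J) ^ 2 ≤ max (1 - (k : ℝ) / n) 0 * frob (B0 - J) ^ 2) ∧
    (∀ kst : ℕ, (B kst - J).mulVec (s kst) = 0 →
      (∀ t < kst, (B t - J).mulVec (s t) ≠ 0) →
      B kst = J ∧ J.mulVec (x (kst + 1)) - b = 0) := by
  subst hB0
  have hR (t : ℕ) : B (t + 1) - J = rejectAlong ((B t - J) *ᵥ s t) (B t - J) := by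
    rw [hBup, AAAupd_sub]
  have hcard (t : ℕ) : #(nonzeroCols (B t - J)) ≤ n - t := by
    induction t with
    | zero => simpa using card_le_univ (nonzeroCols (B 0 - J))
    | succ t ih => rw [hR]; exact (hgreedy t).card_nonzeroCols_rejectAlong_le.trans (by omega)
  refine ⟨le_max_one_sub_div_mul_of_descent (F := fun t => frob (B t - J) ^ 2)
    (e := fun t => enorm' ((B t - J) *ᵥ s t) ^ 2) hn (fun t => sq_nonneg _) (fun t => ?_)
    (fun t => ?_), fun k hk _ => ?_⟩
  · obtain ⟨i, hi, -⟩ := hgreedy t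
    rw [hR, hi]
    exact frob_rejectAlong_sq_le _ _
  · exact (hgreedy t).frob_sq_le.trans
      (mul_le_mul_of_nonneg_right (by exact_mod_cast hcard t) (sq_nonneg _))
  · have hBk : B k = J := sub_eq_zero.mp ((hgreedy k).eq_zero_of_mulVec_eq_zero hk)
    refine ⟨hBk, ?_⟩
    rw [hx, hBk, mulVec_sub, mulVec_mulVec, mul_nonsing_inv J ((isUnit_iff_isUnit_det J).mp hJ),
      one_mulVec, sub_sub_cancel, sub_self]

theorem stmt_3 {n : ℕ} (hn : 0 < n)
    (J : Matrix (Fin n) (Fin n) ℝ) (hJ : IsUnit J) (b : Fin n → ℝ)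
    (B0 : Matrix (Fin n) (Fin n) ℝ) (hB0inv : IsUnit B0)
    (x : ℕ → Fin n → ℝ) (B : ℕ → Matrix (Fin n) (Fin n) ℝ) (s : ℕ → Fin n → ℝ)
    (hB0 : B 0 = B0)
    (hBinv : ∀ t, IsUnit (B t))
    (hx : ∀ t, x (t + 1) = x t - (B t)⁻¹.mulVec (J.mulVec (x t) - b))
    (hgreedy : ∀ t, IsGreedy (B t - J) (s t))
    (hBup : ∀ t, B (t + 1) = AAAupd (B t) J (s t)) :
    (∀ k : ℕ, frob (B k - J) ^ 2 ≤ max (1 - (k : ℝ) / n) 0 * frob (B0 - J) ^ 2) ∧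
    (∀ kst : ℕ, (B kst - J).mulVec (s kst) = 0 →
      (∀ t < kst, (B t - J).mulVec (s t) ≠ 0) →
      B kst = J ∧ J.mulVec (x (kst + 1)) - b = 0) :=
  stmt_3_general hn J hJ b B0 x B s hB0 hx hgreedy hBup
end

section
/- Run AA-I on the linear system F(x) = Jx − b with J ∈ ℝ^{n×n} invertible: x_{t+1} = x_t − B_t⁻¹(J x_t − b) with each B_t invertible, s_t = x_{t+1} − x_t, and B_{t+1} = B_t + (J − B_t) s_t (P_t^⊥ s_t)ᵀ / ((P_t^⊥ s_t)ᵀ s_t), where P_t is the orthogonal projection onto span(s_0, …, s_{t−1}) (P_0 = 0) and P_t^⊥ = I − P_t. Suppose s_0, …, s_k are linearly independent and B_k ≠ J. Then ‖J − B_{k+1}‖_F² ≤ (1 − λ_{n−k}((J − B_k)ᵀ(J − B_k)) / Σ_{i=1}^{n−k} λ_i((J − B_k)ᵀ(J − B_k))) · ‖J − B_k‖_F², where λ_i(A) denotes the i-th largest eigenvalue of the positive semidefinite matrix A. -/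
open Matrix MeasureTheory ProbabilityTheory Finset

/-!
The update of `B_t` fixes all earlier directions: `(J - B_t) s_i = 0` for `i < t`, because
`P_t^⊥ s_t` is orthogonal to `s_0, …, s_{t-1}`. Hence `R = J - B_k` vanishes on the
`k`-dimensional span `S` of `s_0, …, s_{k-1}`, so `RᵀR` has at most `n - k` nonzero eigenvalues
and `‖R‖_F² = tr (RᵀR)` is the sum of the top `n - k` of them. With `u = P_k^⊥ s_k ⊥ S`, the
new residual is `R - ‖u‖⁻² (R u) uᵀ`, whose squared Frobenius norm is `‖R‖_F² - ‖R u‖² / ‖u‖²`.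
Finally `‖R u‖² ≥ λ_{n-k} ‖u‖²`: either `λ_{n-k} = 0`, or `RᵀR` has rank exactly `n - k`, its
kernel is `S`, and `u` lies in the span of eigenvectors with eigenvalue at least `λ_{n-k}`.
-/

def IsAntitoneArrangement {n : ℕ} (lam : ℕ → ℝ) (μ : Fin n → ℝ) : Prop :=
  (∀ i j : ℕ, i ≤ j → j < n → lam j ≤ lam i) ∧ ∃ e : Fin n ≃ Fin n, ∀ i : Fin n, lam i = μ (e i)

namespace IsAntitoneArrangement

variable {n : ℕ} {lam : ℕ → ℝ} {μ : Fin n → ℝ}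

lemma card_ne_zero_eq (hlam : IsAntitoneArrangement lam μ) :
    #{i : Fin n | lam i ≠ 0} = #{i | μ i ≠ 0} := by
  obtain ⟨e, he⟩ := hlam.2
  rw [← Fintype.card_subtype, ← Fintype.card_subtype]
  exact Fintype.card_congr (e.subtypeEquiv fun i => by rw [he])

lemma nonneg (hlam : IsAntitoneArrangement lam μ) (hμ : ∀ i, 0 ≤ μ i) {m : ℕ} (hm : m < n) :
    0 ≤ lam m := by
  obtain ⟨e, he⟩ := hlam.2
  simpa only [← he] using hμ (e ⟨m, hm⟩)

lemma succ_le_card_of_pos (hlam : IsAntitoneArrangement lam μ) {m : ℕ} (hm : m < n)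
    (hpos : 0 < lam m) : m + 1 ≤ #{i | μ i ≠ 0} := by
  rw [← hlam.card_ne_zero_eq, ← Fin.card_Iic (⟨m, hm⟩ : Fin n)]
  refine card_le_card fun i hi => ?_
  have him : i ≤ ⟨m, hm⟩ := Finset.mem_Iic.mp hi
  simpa only [mem_filter, mem_univ, true_and] using
    (hpos.trans_le (hlam.1 i m him hm)).ne'

lemma eq_zero_of_card_le (hlam : IsAntitoneArrangement lam μ) (hμ : ∀ i, 0 ≤ μ i) {r m : ℕ}
    (hr : #{i | μ i ≠ 0} ≤ r) (hrm : r ≤ m) (hm : m < n) : lam m = 0 := by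
  refine ((hlam.nonneg hμ hm).eq_or_lt.resolve_right fun hpos => ?_).symm
  have := hlam.succ_le_card_of_pos hm hpos
  omega

lemma sum_range_eq_sum (hlam : IsAntitoneArrangement lam μ) (hμ : ∀ i, 0 ≤ μ i) {r : ℕ}
    (hr : #{i | μ i ≠ 0} ≤ r) (hrn : r ≤ n) : ∑ i ∈ range r, lam i = ∑ i, μ i := by
  obtain ⟨e, he⟩ := hlam.2
  have htail : ∑ i ∈ Ico r n, lam i = 0 := sum_eq_zero fun m hm =>
    hlam.eq_zero_of_card_le hμ hr (mem_Ico.mp hm).1 (mem_Ico.mp hm).2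
  rw [← add_zero (∑ i ∈ range r, lam i), ← htail, sum_range_add_sum_Ico _ hrn,
    ← Fin.sum_univ_eq_sum_range, ← e.sum_comp μ]
  exact sum_congr rfl fun i _ => he i

lemma eq_zero_of_sum_range_eq_zero (hlam : IsAntitoneArrangement lam μ) (hμ : ∀ i, 0 ≤ μ i)
    {m r : ℕ} (hmr : m < r) (hrn : r ≤ n) (h : ∑ i ∈ range r, lam i = 0) : lam m = 0 :=
  (sum_eq_zero_iff_of_nonneg fun _ hi => hlam.nonneg hμ ((mem_range.mp hi).trans_le hrn)).mp h m
    (mem_range.mpr hmr)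

lemma le_of_ne_zero (hlam : IsAntitoneArrangement lam μ) (hμ : ∀ i, 0 ≤ μ i) {r : ℕ}
    (hr : #{i | μ i ≠ 0} ≤ r) (hrn : r ≤ n) {i : Fin n} (hi : μ i ≠ 0) : lam (r - 1) ≤ μ i := by
  obtain ⟨e, he⟩ := hlam.2
  have hj : lam (e.symm i) = μ i := by rw [he, e.apply_symm_apply]
  have hjr : (e.symm i : ℕ) < r := by
    by_contra! hjr
    exact hi (hj ▸ hlam.eq_zero_of_card_le hμ hr hjr (e.symm i).isLt)
  exact hj ▸ hlam.1 _ _ (by omega) (by omega)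

end IsAntitoneArrangement

lemma OrthonormalBasis.dotProduct_eq_sum {ι : Type*} [Fintype ι]
    (b : OrthonormalBasis ι ℝ (EuclideanSpace ℝ ι)) (v w : ι → ℝ) :
    v ⬝ᵥ w = ∑ i, (⇑(b i) ⬝ᵥ v) * (⇑(b i) ⬝ᵥ w) := by
  have h := b.sum_inner_mul_inner (WithLp.toLp 2 v) (WithLp.toLp 2 w)
  simp only [EuclideanSpace.inner_eq_star_dotProduct, star_trivial] at h
  simpa only [dotProduct_comm v, dotProduct_comm _ (b _ : ι → ℝ)] using h.symm

namespace Matrix.IsHermitian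

variable {ι : Type*} [Fintype ι] [DecidableEq ι] {A : Matrix ι ι ℝ}

lemma dotProduct_mulVec_eq_sum (hA : A.IsHermitian) (v : ι → ℝ) :
    v ⬝ᵥ A *ᵥ v = ∑ i, hA.eigenvalues i * (⇑(hA.eigenvectorBasis i) ⬝ᵥ v) ^ 2 := by
  rw [hA.eigenvectorBasis.dotProduct_eq_sum]
  refine sum_congr rfl fun i _ => ?_
  rw [dotProduct_mulVec, ← mulVec_transpose, ← conjTranspose_eq_transpose_of_trivial, hA.eq,
    mulVec_eigenvectorBasis, smul_dotProduct, smul_eq_mul]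
  ring

lemma mul_dotProduct_self_le (hA : A.IsHermitian) {c : ℝ}
    (hc : ∀ i, hA.eigenvalues i ≠ 0 → c ≤ hA.eigenvalues i) {v : ι → ℝ}
    (hv : ∀ w, A *ᵥ w = 0 → v ⬝ᵥ w = 0) : c * (v ⬝ᵥ v) ≤ v ⬝ᵥ A *ᵥ v := by
  rw [hA.dotProduct_mulVec_eq_sum, hA.eigenvectorBasis.dotProduct_eq_sum, mul_sum]
  refine sum_le_sum fun i _ => ?_
  by_cases hi : hA.eigenvalues i = 0
  · have hker : A *ᵥ ⇑(hA.eigenvectorBasis i) = 0 := by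
      rw [mulVec_eigenvectorBasis, hi, zero_smul]
    simp [dotProduct_comm _ v, hv _ hker]
  · rw [← sq]
    exact mul_le_mul_of_nonneg_right (hc i hi) (sq_nonneg _)

end Matrix.IsHermitian

lemma Matrix.rank_add_finrank_ker {ι : Type*} [Fintype ι] (A : Matrix ι ι ℝ) :
    A.rank + Module.finrank ℝ (LinearMap.ker A.mulVecLin) = Fintype.card ι := by
  rw [rank, LinearMap.finrank_range_add_finrank_ker, Module.finrank_fintype_fun_eq_card]

lemma Matrix.IsHermitian.card_eigenvalues_ne_zero {ι : Type*} [Fintype ι] [DecidableEq ι]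
    {A : Matrix ι ι ℝ} (hA : A.IsHermitian) : #{i | hA.eigenvalues i ≠ 0} = A.rank := by
  rw [hA.rank_eq_card_non_zero_eigs, Fintype.card_subtype]

namespace Matrix.PosSemidef

variable {n : ℕ} {A : Matrix (Fin n) (Fin n) ℝ} (hA : A.PosSemidef) {lam : ℕ → ℝ}
  {S : Submodule ℝ (Fin n → ℝ)}

lemma rank_add_finrank_le (hS : S ≤ LinearMap.ker A.mulVecLin) :
    #{i | hA.1.eigenvalues i ≠ 0} + Module.finrank ℝ S ≤ n := by
  have hker := A.rank_add_finrank_ker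
  rw [Fintype.card_fin] at hker
  rw [hA.1.card_eigenvalues_ne_zero]
  linarith [Submodule.finrank_mono hS]

lemma sum_range_eq_trace (hlam : IsAntitoneArrangement lam hA.1.eigenvalues)
    (hS : S ≤ LinearMap.ker A.mulVecLin) :
    ∑ i ∈ range (n - Module.finrank ℝ S), lam i = A.trace := by
  have hrank := hA.rank_add_finrank_le hS
  rw [hlam.sum_range_eq_sum hA.eigenvalues_nonneg (by omega) (by omega),
    hA.1.trace_eq_sum_eigenvalues]
  simp

lemma sortedEigenvalue_mul_dotProduct_self_le
    (hlam : IsAntitoneArrangement lam hA.1.eigenvalues)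
    (hS : S ≤ LinearMap.ker A.mulVecLin) (hSn : Module.finrank ℝ S < n) {v : Fin n → ℝ}
    (hv : ∀ w ∈ S, v ⬝ᵥ w = 0) :
    lam (n - Module.finrank ℝ S - 1) * (v ⬝ᵥ v) ≤ v ⬝ᵥ A *ᵥ v := by
  have hrank := hA.rank_add_finrank_le hS
  rcases le_or_gt (lam (n - Module.finrank ℝ S - 1)) 0 with hle | hpos
  · have hAv : 0 ≤ v ⬝ᵥ A *ᵥ v := by simpa using hA.dotProduct_mulVec_nonneg v
    exact (mul_nonpos_of_nonpos_of_nonneg hle (dotProduct_self_star_nonneg v)).trans hAv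
  have hcard := hlam.succ_le_card_of_pos (by omega) hpos
  have hker : S = LinearMap.ker A.mulVecLin := by
    refine Submodule.eq_of_le_of_finrank_le hS ?_
    have := A.rank_add_finrank_ker
    rw [← hA.1.card_eigenvalues_ne_zero, Fintype.card_fin] at this
    omega
  exact hA.1.mul_dotProduct_self_le
    (fun i hi => hlam.le_of_ne_zero hA.eigenvalues_nonneg (by omega) (by omega) hi)
    (fun w hw => hv w (hker ▸ hw))

end Matrix.PosSemidef

lemma frob_sq {n : ℕ} (M : Matrix (Fin n) (Fin n) ℝ) : frob M ^ 2 = ∑ i, ∑ j, M i j ^ 2 :=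
  Real.sq_sqrt (by positivity)

lemma frob_sq_eq_trace {n : ℕ} (M : Matrix (Fin n) (Fin n) ℝ) : frob M ^ 2 = (Mᵀ * M).trace := by
  rw [frob_sq, sum_comm]
  simp [trace, mul_apply, sq]

lemma frob_sq_sub_vecMulVec {n : ℕ} (R : Matrix (Fin n) (Fin n) ℝ) (u : Fin n → ℝ) :
    frob (R - (u ⬝ᵥ u)⁻¹ • vecMulVec (R *ᵥ u) u) ^ 2
      = frob R ^ 2 - (u ⬝ᵥ u)⁻¹ * (R *ᵥ u ⬝ᵥ R *ᵥ u) := by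
  set c := (u ⬝ᵥ u)⁻¹
  have hc : c * c * (u ⬝ᵥ u) = c := by
    rcases eq_or_ne (u ⬝ᵥ u) 0 with h | h
    · simp [c, h]
    · rw [mul_assoc, inv_mul_cancel₀ h, mul_one]
  have hrow : ∀ i, ∑ j, (R i j - c * ((R *ᵥ u) i * u j)) ^ 2
      = ∑ j, R i j ^ 2 - c * ((R *ᵥ u) i * (R *ᵥ u) i) := by
    intro i
    set w := R *ᵥ u
    have hexpand : ∀ j, (R i j - c * (w i * u j)) ^ 2
        = R i j ^ 2 - 2 * c * w i * (R i j * u j) + c * c * (w i * w i) * (u j * u j) :=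
      fun j => by ring
    simp only [hexpand, sum_add_distrib, sum_sub_distrib, ← mul_sum]
    change _ - _ * w i + _ * (u ⬝ᵥ u) = _
    linear_combination (w i * w i) * hc
  rw [frob_sq, frob_sq, dotProduct, mul_sum, ← sum_sub_distrib]
  simp only [Matrix.sub_apply, Matrix.smul_apply, vecMulVec_apply, smul_eq_mul]
  exact sum_congr rfl fun i _ => hrow i

namespace IsOrthProj

variable {n : ℕ} {P : Matrix (Fin n) (Fin n) ℝ} {V : Submodule ℝ (Fin n → ℝ)}

lemma sub_one_sub_mulVec_mem (hP : IsOrthProj P V) (v : Fin n → ℝ) :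
    v - (1 - P) *ᵥ v ∈ V := by
  simpa [sub_mulVec] using hP.2.2.1 v

lemma one_sub_mulVec_dotProduct_eq_zero (hP : IsOrthProj P V) (v : Fin n → ℝ) {w : Fin n → ℝ}
    (hw : w ∈ V) : (1 - P) *ᵥ v ⬝ᵥ w = 0 := by
  obtain ⟨hsymm, hidem, -, hfix⟩ := hP
  rw [← hfix w hw, dotProduct_mulVec, ← mulVec_transpose, hsymm.eq, mulVec_mulVec, mul_sub,
    mul_one, hidem, sub_self, zero_mulVec, zero_dotProduct]

lemma one_sub_mulVec_dotProduct_self (hP : IsOrthProj P V) (v : Fin n → ℝ) :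
    (1 - P) *ᵥ v ⬝ᵥ v = (1 - P) *ᵥ v ⬝ᵥ (1 - P) *ᵥ v := by
  nth_rw 2 [← sub_add_cancel v ((1 - P) *ᵥ v)]
  rw [dotProduct_add, hP.one_sub_mulVec_dotProduct_eq_zero v (hP.sub_one_sub_mulVec_mem v),
    zero_add]

lemma one_sub_mulVec_ne_zero (hP : IsOrthProj P V) {v : Fin n → ℝ} (hv : v ∉ V) :
    (1 - P) *ᵥ v ≠ 0 := fun h => hv (by simpa [h] using hP.sub_one_sub_mulVec_mem v)

lemma one_sub_mulVec_dotProduct_self_pos (hP : IsOrthProj P V) {v : Fin n → ℝ} (hv : v ∉ V) :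
    0 < (1 - P) *ᵥ v ⬝ᵥ (1 - P) *ᵥ v := by
  simpa using dotProduct_self_star_pos_iff.mpr (hP.one_sub_mulVec_ne_zero hv)

end IsOrthProj

section LinearIndependent

variable {K M : Type*} [DivisionRing K] [AddCommGroup M] [Module K M] {s : ℕ → M}

lemma notMem_span_image_Iio {k t : ℕ} (hindep : LinearIndependent K fun i : Fin (k + 1) => s i)
    (ht : t ≤ k) : s t ∉ Submodule.span K (s '' Set.Iio t) := by
  have himage : (fun i : Fin (k + 1) => s i) '' {i | (i : ℕ) < t} = s '' Set.Iio t := by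
    ext x
    simp only [Set.mem_image, Set.mem_ofPred_eq, Set.mem_Iio]
    exact ⟨fun ⟨i, hi, hx⟩ => ⟨i, hi, hx⟩, fun ⟨m, hm, hx⟩ => ⟨⟨m, by omega⟩, hm, hx⟩⟩
  simpa [himage] using hindep.notMem_span_image (s := {i | (i : ℕ) < t})
    (x := ⟨t, by omega⟩) (by simp)

lemma finrank_span_image_Iio {k : ℕ} (hindep : LinearIndependent K fun i : Fin k => s i) :
    Module.finrank K (Submodule.span K (s '' Set.Iio k)) = k := by
  have hrange : s '' Set.Iio k = Set.range fun i : Fin k => s i := by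
    ext x
    simp [Fin.exists_iff]
  rw [hrange, finrank_span_eq_card hindep, Fintype.card_fin]

end LinearIndependent

noncomputable def aaIUpdate {n : ℕ} (J B P : Matrix (Fin n) (Fin n) ℝ) (s : Fin n → ℝ) :
    Matrix (Fin n) (Fin n) ℝ :=
  B + ((1 - P) *ᵥ s ⬝ᵥ s)⁻¹ • vecMulVec ((J - B) *ᵥ s) ((1 - P) *ᵥ s)

section AndersonTypeI

variable {n : ℕ} {J : Matrix (Fin n) (Fin n) ℝ} {B : ℕ → Matrix (Fin n) (Fin n) ℝ}
  {s : ℕ → Fin n → ℝ} {P : ℕ → Matrix (Fin n) (Fin n) ℝ} {k : ℕ}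

lemma sub_mulVec_succ (hBup : ∀ t, B (t + 1) = aaIUpdate J (B t) (P t) (s t)) (t : ℕ)
    (v : Fin n → ℝ) :
    (J - B (t + 1)) *ᵥ v = (J - B t) *ᵥ v -
      (((1 - P t) *ᵥ s t ⬝ᵥ s t)⁻¹ * ((1 - P t) *ᵥ s t ⬝ᵥ v)) • (J - B t) *ᵥ s t := by
  rw [hBup t, aaIUpdate, sub_add_eq_sub_sub, sub_mulVec, smul_mulVec, vecMulVec_mulVec,
    op_smul_eq_smul, smul_smul]

variable (hP : ∀ t, IsOrthProj (P t) (Submodule.span ℝ (s '' Set.Iio t)))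
  (hBup : ∀ t, B (t + 1) = aaIUpdate J (B t) (P t) (s t))
  (hindep : LinearIndependent ℝ fun i : Fin (k + 1) => s i)

include hP hBup hindep

lemma sub_mulVec_eq_zero_of_lt {t : ℕ} (ht : t ≤ k) {i : ℕ} (hi : i < t) :
    (J - B t) *ᵥ s i = 0 := by
  induction t with
  | zero => omega
  | succ t ih =>
    have hden :=
      (hP t).one_sub_mulVec_dotProduct_self_pos (notMem_span_image_Iio hindep (by omega))
    rw [sub_mulVec_succ hBup]
    rcases Nat.lt_succ_iff_lt_or_eq.mp hi with hi | rfl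
    · rw [ih (by omega) hi,
        (hP t).one_sub_mulVec_dotProduct_eq_zero _ (Submodule.subset_span ⟨i, hi, rfl⟩)]
      simp
    · rw [(hP _).one_sub_mulVec_dotProduct_self, inv_mul_cancel₀ hden.ne', one_smul, sub_self]

lemma span_le_ker_sub_mulVecLin :
    Submodule.span ℝ (s '' Set.Iio k) ≤ LinearMap.ker (J - B k).mulVecLin := by
  rw [Submodule.span_le]
  rintro _ ⟨i, hi, rfl⟩
  exact sub_mulVec_eq_zero_of_lt hP hBup hindep le_rfl hi

lemma sub_succ_eq_sub_vecMulVec :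
    J - B (k + 1) = (J - B k) - ((1 - P k) *ᵥ s k ⬝ᵥ (1 - P k) *ᵥ s k)⁻¹ •
      vecMulVec ((J - B k) *ᵥ (1 - P k) *ᵥ s k) ((1 - P k) *ᵥ s k) := by
  have hker : (J - B k) *ᵥ (s k - (1 - P k) *ᵥ s k) = 0 :=
    span_le_ker_sub_mulVecLin hP hBup hindep ((hP k).sub_one_sub_mulVec_mem (s k))
  rw [mulVec_sub, sub_eq_zero] at hker
  rw [hBup k, aaIUpdate, sub_add_eq_sub_sub, (hP k).one_sub_mulVec_dotProduct_self, hker]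

end AndersonTypeI

theorem stmt_6_general {n : ℕ}
    (J : Matrix (Fin n) (Fin n) ℝ)
    (B : ℕ → Matrix (Fin n) (Fin n) ℝ)
    (s : ℕ → Fin n → ℝ) (P : ℕ → Matrix (Fin n) (Fin n) ℝ)
    (hP : ∀ t, IsOrthProj (P t) (Submodule.span ℝ (s '' Set.Iio t)))
    (hBup : ∀ t, B (t + 1) = B t +
      ((((1 : Matrix (Fin n) (Fin n) ℝ) - P t).mulVec (s t)) ⬝ᵥ (s t))⁻¹ •
        Matrix.vecMulVec ((J - B t).mulVec (s t))
          (((1 : Matrix (Fin n) (Fin n) ℝ) - P t).mulVec (s t)))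
    (k : ℕ)
    (hindep : LinearIndependent ℝ (fun i : Fin (k + 1) => s i))
    (hA : ((J - B k)ᵀ * (J - B k)).IsHermitian)
    (lam : ℕ → ℝ)
    (hlam_anti : ∀ i j : ℕ, i ≤ j → j < n → lam j ≤ lam i)
    (hlam_perm : ∃ e : Fin n ≃ Fin n, ∀ i : Fin n, lam i = hA.eigenvalues (e i)) :
    frob (J - B (k + 1)) ^ 2 ≤
      (1 - lam (n - k - 1) / ∑ i ∈ Finset.range (n - k), lam i) * frob (J - B k) ^ 2 := by
  set R := J - B k
  set u := (1 - P k) *ᵥ s k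
  have hkn : k + 1 ≤ n := by simpa using hindep.fintype_card_le_finrank
  have hSk : Module.finrank ℝ (Submodule.span ℝ (s '' Set.Iio k)) = k :=
    finrank_span_image_Iio (hindep.comp Fin.castSucc (Fin.castSucc_injective _))
  have hS : Submodule.span ℝ (s '' Set.Iio k) ≤ LinearMap.ker (Rᵀ * R).mulVecLin := by
    rw [ker_mulVecLin_transpose_mul_self]
    exact span_le_ker_sub_mulVecLin hP hBup hindep
  have hpsd : (Rᵀ * R).PosSemidef := by simpa using posSemidef_conjTranspose_mul_self R
  have hlam : IsAntitoneArrangement lam hpsd.1.eigenvalues := ⟨hlam_anti, hlam_perm⟩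
  have htrace : ∑ i ∈ range (n - k), lam i = frob R ^ 2 := by
    rw [frob_sq_eq_trace, ← hSk, hpsd.sum_range_eq_trace hlam hS]
  have hbound : lam (n - k - 1) * (u ⬝ᵥ u) ≤ R *ᵥ u ⬝ᵥ R *ᵥ u := by
    have := hpsd.sortedEigenvalue_mul_dotProduct_self_le hlam hS (by omega)
      fun w hw => (hP k).one_sub_mulVec_dotProduct_eq_zero (s k) hw
    rwa [hSk, ← mulVec_mulVec, dotProduct_mulVec u Rᵀ, vecMul_transpose] at this
  have hu : 0 < u ⬝ᵥ u :=
    (hP k).one_sub_mulVec_dotProduct_self_pos (notMem_span_image_Iio hindep le_rfl)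
  calc frob (J - B (k + 1)) ^ 2 = frob R ^ 2 - (u ⬝ᵥ u)⁻¹ * (R *ᵥ u ⬝ᵥ R *ᵥ u) := by
        rw [sub_succ_eq_sub_vecMulVec hP hBup hindep, frob_sq_sub_vecMulVec]
    _ ≤ frob R ^ 2 - lam (n - k - 1) := by
        gcongr
        rwa [inv_mul_eq_div, le_div_iff₀ hu]
    _ = (1 - lam (n - k - 1) / ∑ i ∈ range (n - k), lam i) * frob R ^ 2 := by
        rw [htrace, sub_mul, one_mul, div_mul_cancel_of_imp (htrace ▸
          hlam.eq_zero_of_sum_range_eq_zero hpsd.eigenvalues_nonneg (by omega) (by omega))]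

theorem stmt_6 {n : ℕ} (hn : 0 < n)
    (J : Matrix (Fin n) (Fin n) ℝ) (hJ : IsUnit J) (b : Fin n → ℝ)
    (x : ℕ → Fin n → ℝ) (B : ℕ → Matrix (Fin n) (Fin n) ℝ)
    (s : ℕ → Fin n → ℝ) (P : ℕ → Matrix (Fin n) (Fin n) ℝ)
    (hBinv : ∀ t, IsUnit (B t))
    (hx : ∀ t, x (t + 1) = x t - (B t)⁻¹.mulVec (J.mulVec (x t) - b))
    (hs : ∀ t, s t = x (t + 1) - x t)
    (hP : ∀ t, IsOrthProj (P t) (Submodule.span ℝ (s '' Set.Iio t)))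
    (hBup : ∀ t, B (t + 1) = B t +
      ((((1 : Matrix (Fin n) (Fin n) ℝ) - P t).mulVec (s t)) ⬝ᵥ (s t))⁻¹ •
        Matrix.vecMulVec ((J - B t).mulVec (s t))
          (((1 : Matrix (Fin n) (Fin n) ℝ) - P t).mulVec (s t)))
    (k : ℕ)
    (hindep : LinearIndependent ℝ (fun i : Fin (k + 1) => s i))
    (hBk : B k ≠ J)
    (hA : ((J - B k)ᵀ * (J - B k)).IsHermitian)
    (lam : ℕ → ℝ)
    (hlam_anti : ∀ i j : ℕ, i ≤ j → j < n → lam j ≤ lam i)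
    (hlam_perm : ∃ e : Fin n ≃ Fin n, ∀ i : Fin n, lam i = hA.eigenvalues (e i)) :
    frob (J - B (k + 1)) ^ 2 ≤
      (1 - lam (n - k - 1) / ∑ i ∈ Finset.range (n - k), lam i) * frob (J - B k) ^ 2 :=
  stmt_6_general J B s P hP hBup k hindep hA lam hlam_anti hlam_perm
end

section
/- Let F : ℝⁿ → ℝⁿ be continuously differentiable with Jacobian J(x), satisfying Assumption 1 (‖J(x) − J(x*)‖_F ≤ M‖x − x*‖ for all x) and Assumption 2 (F(x*) = 0 and J* := J(x*) invertible). Let B ∈ ℝ^{n×n}, and set c := ‖J*⁻¹‖, σ := ‖B − J*‖_F, r := ‖x − x*‖. If c(σ + M r) < 1, then B is invertible and the quasi-Newton step x' = x − B⁻¹ F(x) satisfies ‖x' − x*‖ ≤ ((3 c M r / 2 + c σ) / (1 − c(σ + M r))) · r. -/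
open Matrix MeasureTheory ProbabilityTheory Finset

/-!
With `e = x - x*` and `F x* = 0`, the error of the step is
`x' - x* = B⁻¹ ((B - J*) e - (F x - F x* - J* e))`.
Writing `B = J* (1 + J*⁻¹ (B - J*))` and summing a Neumann series shows that `B` is invertible with
`‖B⁻¹‖ ≤ c / (1 - c σ)` (the spectral norm is dominated by the Frobenius norm), and the mean value
inequality applied to `F - J* ·` bounds the Taylor remainder by `M r²`. Hence
`‖x' - x*‖ ≤ c (σ + M r) r / (1 - c σ)`, which is at most the claimed bound.
-/

theorem isUnit_of_norm_sub_le {R : Type*} [NormedRing R] [HasSummableGeomSeries R] {J K B : R} {σ : ℝ} (hJK : J * K = 1) (hKJ : K * J = 1)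
    (hσ : ‖B - J‖ ≤ σ) (h : ‖K‖ * σ < 1) : IsUnit B := by
  have hfactor : B = J * (1 - -(K * (B - J))) := by
    rw [sub_neg_eq_add, mul_add, mul_one, ← mul_assoc, hJK, one_mul, add_sub_cancel]
  have hsmall : ‖-(K * (B - J))‖ < 1 := by
    rw [norm_neg]
    exact (norm_mul_le K (B - J)).trans_lt (lt_of_le_of_lt (by gcongr) h)
  rw [hfactor]
  exact IsUnit.mul ⟨⟨J, K, hJK, hKJ⟩, rfl⟩ (isUnit_one_sub_of_norm_lt_one hsmall)

theorem norm_inv_le_of_norm_sub_le {R : Type*} [NormedRing R] {J K B B' : R} {σ : ℝ}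
    (hKJ : K * J = 1) (hBB' : B * B' = 1) (hσ : ‖B - J‖ ≤ σ) (h : ‖K‖ * σ < 1) :
    ‖B'‖ ≤ ‖K‖ / (1 - ‖K‖ * σ) := by
  have hid : B' = K - K * (B - J) * B' := by
    have hKB : K * B = 1 + K * (B - J) := by rw [mul_sub, hKJ, add_sub_cancel]
    refine eq_sub_of_add_eq ?_
    calc B' + K * (B - J) * B' = K * B * B' := by rw [hKB, add_mul, one_mul]
      _ = K := by rw [mul_assoc, hBB', mul_one]
  have hrec : ‖B'‖ ≤ ‖K‖ + ‖K‖ * σ * ‖B'‖ :=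
    calc ‖B'‖ = ‖K - K * (B - J) * B'‖ := by rw [← hid]
      _ ≤ ‖K‖ + ‖K * (B - J) * B'‖ := norm_sub_le _ _
      _ ≤ ‖K‖ + ‖K‖ * ‖B - J‖ * ‖B'‖ := by
        gcongr
        exact (norm_mul_le _ _).trans (by gcongr; exact norm_mul_le _ _)
      _ ≤ ‖K‖ + ‖K‖ * σ * ‖B'‖ := by gcongr
  rw [le_div_iff₀ (by linarith)]
  linarith

theorem norm_sub_sub_fderiv_le_of_lipschitz {E F : Type*} [NormedAddCommGroup E] [NormedSpace ℝ E]
    [NormedAddCommGroup F] [NormedSpace ℝ F] {f : E → F} {f' : E → E →L[ℝ] F} {M : ℝ}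
    (hf : ∀ y, HasFDerivAt f (f' y) y) (hM : 0 ≤ M) (a b : E)
    (hlip : ∀ y, ‖f' y - f' a‖ ≤ M * ‖y - a‖) :
    ‖f b - f a - f' a (b - a)‖ ≤ M * ‖b - a‖ ^ 2 := by
  have bound : ∀ y ∈ segment ℝ a b, ‖f' y - f' a‖ ≤ M * ‖b - a‖ := fun y hy ↦ by
    have hya : ‖y - a‖ ≤ ‖b - a‖ := by
      simpa [dist_eq_norm, norm_sub_rev a b] using segment_subset_closedBall_left a b hy
    exact (hlip y).trans (by gcongr)
  have := (convex_segment a b).norm_image_sub_le_of_norm_hasFDerivWithin_le'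
    (fun y _ ↦ (hf y).hasFDerivWithinAt) bound (left_mem_segment ℝ a b) (right_mem_segment ℝ a b)
  rwa [mul_assoc, ← sq] at this

theorem hasFDerivAt_toLp_comp_ofLp {ι : Type*} [Fintype ι] [DecidableEq ι]
    {F : (ι → ℝ) → ι → ℝ} {A : Matrix ι ι ℝ} {w : EuclideanSpace ℝ ι}
    (h : HasFDerivAt F A.mulVecLin.toContinuousLinearMap (WithLp.ofLp w)) :
    HasFDerivAt (fun v : EuclideanSpace ℝ ι ↦ WithLp.toLp 2 (F (WithLp.ofLp v)))
      (Matrix.toEuclideanCLM (𝕜 := ℝ) A) w := by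
  let e := EuclideanSpace.equiv ι ℝ
  refine (e.symm.hasFDerivAt.comp w (h.comp w e.hasFDerivAt)).congr_fderiv ?_
  ext1 v
  rfl

section EuclideanNorms

open scoped Matrix.Norms.L2Operator

variable {n : ℕ}

theorem enorm'_eq_norm (v : Fin n → ℝ) : enorm' v = ‖WithLp.toLp 2 v‖ := by
  simp [enorm', EuclideanSpace.norm_eq]

theorem opNorm'_eq_norm (A : Matrix (Fin n) (Fin n) ℝ) : opNorm' A = ‖A‖ := rfl

theorem enorm'_sub_le (u v : Fin n → ℝ) : enorm' (u - v) ≤ enorm' u + enorm' v := by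
  simpa only [enorm'_eq_norm, WithLp.toLp_sub] using norm_sub_le _ _

theorem enorm'_mulVec_le (A : Matrix (Fin n) (Fin n) ℝ) (v : Fin n → ℝ) :
    enorm' (A *ᵥ v) ≤ opNorm' A * enorm' v := by
  rw [enorm'_eq_norm, enorm'_eq_norm]
  exact (Matrix.toEuclideanCLM (𝕜 := ℝ) A).le_opNorm (WithLp.toLp 2 v)

theorem enorm'_mulVec_le_frob (A : Matrix (Fin n) (Fin n) ℝ) (v : Fin n → ℝ) :
    enorm' (A *ᵥ v) ≤ frob A * enorm' v := by
  unfold enorm' frob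
  rw [← Real.sqrt_mul (by positivity), Finset.sum_mul]
  gcongr with i
  simpa [Matrix.mulVec, dotProduct] using
    Finset.sum_mul_sq_le_sq_mul_sq Finset.univ (fun j ↦ A i j) v

theorem opNorm'_le_frob (A : Matrix (Fin n) (Fin n) ℝ) : opNorm' A ≤ frob A := by
  refine ContinuousLinearMap.opNorm_le_bound _ (Real.sqrt_nonneg _) fun w ↦ ?_
  have := enorm'_mulVec_le_frob A (WithLp.ofLp w)
  rwa [enorm'_eq_norm, enorm'_eq_norm] at this

theorem enorm'_sub_sub_mulVec_le {F : (Fin n → ℝ) → Fin n → ℝ}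
    {Jac : (Fin n → ℝ) → Matrix (Fin n) (Fin n) ℝ}
    (hJacF : ∀ y, HasFDerivAt F (Jac y).mulVecLin.toContinuousLinearMap y)
    {xstar : Fin n → ℝ} {M : ℝ} (hM : 0 ≤ M)
    (hLip : ∀ y, frob (Jac y - Jac xstar) ≤ M * enorm' (y - xstar)) (x : Fin n → ℝ) :
    enorm' (F x - F xstar - Jac xstar *ᵥ (x - xstar)) ≤ M * enorm' (x - xstar) ^ 2 := by
  have hlip : ∀ w : EuclideanSpace ℝ (Fin n), ‖Matrix.toEuclideanCLM (𝕜 := ℝ) (Jac w.ofLp) -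
      Matrix.toEuclideanCLM (𝕜 := ℝ) (Jac xstar)‖ ≤ M * ‖w - WithLp.toLp 2 xstar‖ := fun w ↦ by
    rw [← map_sub, ← Matrix.cstar_norm_def, ← opNorm'_eq_norm]
    simpa [enorm'_eq_norm] using (opNorm'_le_frob _).trans (hLip w.ofLp)
  have := norm_sub_sub_fderiv_le_of_lipschitz (fun w ↦ hasFDerivAt_toLp_comp_ofLp (hJacF _)) hM
    (WithLp.toLp 2 xstar) (WithLp.toLp 2 x) hlip
  simpa [enorm'_eq_norm, Matrix.mulVec_sub] using this

end EuclideanNorms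

theorem quasiNewton_error_eq {ι α : Type*} [Fintype ι] [DecidableEq ι] [Ring α]
    {B C : Matrix ι ι α} (hCB : C * B = 1) (J : Matrix ι ι α) (x xstar v : ι → α) :
    x - C *ᵥ v - xstar = C *ᵥ ((B - J) *ᵥ (x - xstar) - (v - J *ᵥ (x - xstar))) := by
  rw [Matrix.sub_mulVec, sub_sub_sub_cancel_right, Matrix.mulVec_sub, Matrix.mulVec_mulVec, hCB,
    Matrix.one_mulVec]
  abel

theorem quasiNewton_rate_le {c σ M r : ℝ} (hc : 0 ≤ c) (hσ : 0 ≤ σ) (hM : 0 ≤ M) (hr : 0 ≤ r)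
    (h : c * (σ + M * r) < 1) :
    c / (1 - c * σ) * (σ + M * r) ≤ (3 * c * M * r / 2 + c * σ) / (1 - c * (σ + M * r)) := by
  have hcMr : 0 ≤ c * M * r := by positivity
  rw [div_mul_eq_mul_div]
  calc c * (σ + M * r) / (1 - c * σ) ≤ c * (σ + M * r) / (1 - c * (σ + M * r)) :=
        div_le_div_of_nonneg_left (by positivity) (by linarith) (by linarith)
    _ ≤ (3 * c * M * r / 2 + c * σ) / (1 - c * (σ + M * r)) :=
        div_le_div_of_nonneg_right (by linarith) (by linarith)

open scoped Matrix.Norms.L2Operator in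
theorem stmt_13_general {n : ℕ}
    (F : (Fin n → ℝ) → (Fin n → ℝ)) (Jac : (Fin n → ℝ) → Matrix (Fin n) (Fin n) ℝ)
    (hJacF : ∀ y, HasFDerivAt F ((Jac y).mulVecLin.toContinuousLinearMap) y)
    (xstar : Fin n → ℝ) (M : ℝ) (hM : 0 < M)
    (hLip : ∀ y, frob (Jac y - Jac xstar) ≤ M * enorm' (y - xstar))
    (hFstar : F xstar = 0) (hJstar : IsUnit (Jac xstar))
    (B : Matrix (Fin n) (Fin n) ℝ) (x : Fin n → ℝ)
    (c σ r : ℝ)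
    (hc : c = opNorm' ((Jac xstar)⁻¹))
    (hσ : σ = frob (B - Jac xstar))
    (hr : r = enorm' (x - xstar))
    (hlt : c * (σ + M * r) < 1) :
    IsUnit B ∧
    enorm' ((x - B⁻¹.mulVec (F x)) - xstar) ≤
      (3 * c * M * r / 2 + c * σ) / (1 - c * (σ + M * r)) * r := by
  set J := Jac xstar
  have hJ : IsUnit J.det := (Matrix.isUnit_iff_isUnit_det J).mp hJstar
  have hBJ : ‖B - J‖ ≤ σ := hσ ▸ opNorm'_le_frob _
  have hc0 : 0 ≤ c := hc ▸ norm_nonneg _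
  have hσ0 : 0 ≤ σ := (norm_nonneg _).trans hBJ
  have hr0 : 0 ≤ r := hr ▸ Real.sqrt_nonneg _
  have hcσ : c * σ < 1 := by nlinarith [mul_nonneg hc0 (mul_nonneg hM.le hr0)]
  have hJσ : ‖J⁻¹‖ * σ < 1 := by rwa [← opNorm'_eq_norm, ← hc]
  have hB : IsUnit B :=
    isUnit_of_norm_sub_le (J.mul_nonsing_inv hJ) (J.nonsing_inv_mul hJ) hBJ hJσ
  have hBdet : IsUnit B.det := (Matrix.isUnit_iff_isUnit_det B).mp hB
  have hBinv : ‖B⁻¹‖ ≤ c / (1 - c * σ) := by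
    rw [hc, opNorm'_eq_norm]
    exact norm_inv_le_of_norm_sub_le (J.nonsing_inv_mul hJ) (B.mul_nonsing_inv hBdet) hBJ hJσ
  have hBJx : enorm' ((B - J) *ᵥ (x - xstar)) ≤ σ * r :=
    (enorm'_mulVec_le _ _).trans (hr ▸ mul_le_mul_of_nonneg_right hBJ hr0)
  have hTaylor := enorm'_sub_sub_mulVec_le hJacF hM.le hLip x
  rw [hFstar, sub_zero, ← hr] at hTaylor
  refine ⟨hB, ?_⟩
  calc enorm' (x - B⁻¹ *ᵥ F x - xstar)
      = enorm' (B⁻¹ *ᵥ ((B - J) *ᵥ (x - xstar) - (F x - J *ᵥ (x - xstar)))) := by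
        rw [quasiNewton_error_eq (B.nonsing_inv_mul hBdet)]
    _ ≤ ‖B⁻¹‖ * (enorm' ((B - J) *ᵥ (x - xstar)) + enorm' (F x - J *ᵥ (x - xstar))) :=
        (enorm'_mulVec_le _ _).trans (mul_le_mul_of_nonneg_left (enorm'_sub_le _ _) (norm_nonneg _))
    _ ≤ c / (1 - c * σ) * (σ * r + M * r ^ 2) :=
        mul_le_mul hBinv (add_le_add hBJx hTaylor)
          (add_nonneg (Real.sqrt_nonneg _) (Real.sqrt_nonneg _)) (div_nonneg hc0 (by linarith))
    _ = c / (1 - c * σ) * (σ + M * r) * r := by ring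
    _ ≤ (3 * c * M * r / 2 + c * σ) / (1 - c * (σ + M * r)) * r := by
        gcongr
        exact quasiNewton_rate_le hc0 hσ0 hM.le hr0 hlt

theorem stmt_13 {n : ℕ} (hn : 0 < n)
    (F : (Fin n → ℝ) → (Fin n → ℝ)) (Jac : (Fin n → ℝ) → Matrix (Fin n) (Fin n) ℝ)
    (hF : ContDiff ℝ 1 F)
    (hJacF : ∀ y, HasFDerivAt F ((Jac y).mulVecLin.toContinuousLinearMap) y)
    (xstar : Fin n → ℝ) (M : ℝ) (hM : 0 < M)
    (hLip : ∀ y, frob (Jac y - Jac xstar) ≤ M * enorm' (y - xstar))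
    (hFstar : F xstar = 0) (hJstar : IsUnit (Jac xstar))
    (B : Matrix (Fin n) (Fin n) ℝ) (x : Fin n → ℝ)
    (c σ r : ℝ)
    (hc : c = opNorm' ((Jac xstar)⁻¹))
    (hσ : σ = frob (B - Jac xstar))
    (hr : r = enorm' (x - xstar))
    (hlt : c * (σ + M * r) < 1) :
    IsUnit B ∧
    enorm' ((x - B⁻¹.mulVec (F x)) - xstar) ≤
      (3 * c * M * r / 2 + c * σ) / (1 - c * (σ + M * r)) * r :=
  stmt_13_general F Jac hJacF xstar M hM hLip hFstar hJstar B x c σ r hc hσ hr hlt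
end

section
/- Let B, J, A ∈ ℝ^{n×n}, let s be a standard basis vector maximizing ‖(B − J) e_i‖ over e_1, …, e_n, and let B' = AAA(B, J, s). Then ‖B' − A‖_F ≤ (1 − 1/(2n)) ‖B − A‖_F + (2 − 1/(2n)) ‖J − A‖_F. -/
open Matrix MeasureTheory ProbabilityTheory Finset

section
attribute [local instance] Matrix.frobeniusNormedAddCommGroup

lemma frob_eq_norm {n : ℕ} (A : Matrix (Fin n) (Fin n) ℝ) : frob A = ‖A‖ := by
  rw [Matrix.frobenius_norm_def, frob, Real.sqrt_eq_rpow]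
  congr 1
  simp [Real.norm_eq_abs, sq_abs]

lemma frob_add_le {n : ℕ} (A B : Matrix (Fin n) (Fin n) ℝ) :
    frob (A + B) ≤ frob A + frob B := by
  simp only [frob_eq_norm]; exact norm_add_le A B

lemma frob_neg {n : ℕ} (A : Matrix (Fin n) (Fin n) ℝ) : frob (-A) = frob A := by
  simp only [frob_eq_norm]; exact norm_neg A

lemma frob_nonneg {n : ℕ} (A : Matrix (Fin n) (Fin n) ℝ) : 0 ≤ frob A := by
  simp only [frob_eq_norm]; exact norm_nonneg A
end

lemma frob_sub_le {n : ℕ} (A B C : Matrix (Fin n) (Fin n) ℝ) :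
    frob (A - C) ≤ frob (A - B) + frob (B - C) := by
  have := frob_add_le (A - B) (B - C)
  simpa using this

theorem stmt_15 {n : ℕ} (hn : 0 < n) (B J A : Matrix (Fin n) (Fin n) ℝ)
    (s : Fin n → ℝ) (hs : IsGreedy (B - J) s) :
    frob (AAAupd B J s - A) ≤
      (1 - 1 / (2 * (n : ℝ))) * frob (B - A) + (2 - 1 / (2 * (n : ℝ))) * frob (J - A) := by
  obtain ⟨i, hsi, hmax⟩ := hs
  have hn' : (1:ℝ) ≤ n := by exact_mod_cast hn
  have h2n : (0:ℝ) < 2 * n := by positivity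
  have hc : (0:ℝ) ≤ 1 - 1 / (2 * (n:ℝ)) := by
    have : 1 / (2 * (n:ℝ)) ≤ 1 := by rw [div_le_one h2n]; linarith
    linarith
  -- column data of B - J
  set w : Fin n → Fin n → ℝ := fun j k => (B - J) k j with hw
  set Sw : Fin n → ℝ := fun j => ∑ k, (w j k) ^ 2 with hSw
  have hSw_nonneg : ∀ j, 0 ≤ Sw j := fun j => Finset.sum_nonneg fun k _ => sq_nonneg _
  have henorm : ∀ j, enorm' ((B - J).mulVec (Pi.single j 1)) = Real.sqrt (Sw j) := by
    intro j
    unfold enorm'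
    congr 1
    apply Finset.sum_congr rfl
    intro k _
    simp [Matrix.mulVec_single, hw]
  have hgreedy : ∀ j, Sw j ≤ Sw i := by
    intro j
    have h := hmax j
    rw [henorm, henorm] at h
    calc Sw j = Real.sqrt (Sw j) ^ 2 := (Real.sq_sqrt (hSw_nonneg j)).symm
      _ ≤ Real.sqrt (Sw i) ^ 2 := by
          exact pow_le_pow_left₀ (Real.sqrt_nonneg _) h 2
      _ = Sw i := Real.sq_sqrt (hSw_nonneg i)
  set S : ℝ := ∑ j, Sw j with hSdef
  have hS_nonneg : 0 ≤ S := Finset.sum_nonneg fun j _ => hSw_nonneg j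
  have hfrobBJ : frob (B - J) = Real.sqrt S := by
    unfold frob
    rw [Finset.sum_comm]
  by_cases hzero : (J - B).mulVec s = 0
  · -- degenerate case: B = J
    rw [AAAupd, if_pos hzero]
    have hSwi : Sw i = 0 := by
      have : ∀ k, (B - J) k i = 0 := by
        intro k
        have := congrFun hzero k
        have h2 : (J - B).mulVec s k = (J - B) k i := by
          rw [hsi]; simp [Matrix.mulVec_single]
        rw [h2] at this
        have : (J - B) k i = 0 := this
        simp only [Matrix.sub_apply] at this ⊢
        linarith
      simp only [hSw, hw]
      exact Finset.sum_eq_zero fun k _ => by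
        have h := this k
        simp only [Matrix.sub_apply] at h
        simp [h]
    have hSwj : ∀ j, Sw j = 0 := by
      intro j
      have := hgreedy j
      have := hSw_nonneg j
      linarith [hgreedy j, hSwi]
    have hBJ : frob (B - J) = 0 := by
      rw [hfrobBJ]
      have : S = 0 := by
        rw [hSdef]; exact Finset.sum_eq_zero fun j _ => hSwj j
      rw [this, Real.sqrt_zero]
    have htri : frob (B - A) ≤ frob (J - A) := by
      have := frob_sub_le B J A
      linarith
    have h1 := frob_nonneg (B - A)
    have h2 := frob_nonneg (J - A)
    nlinarith
  · rw [AAAupd, if_neg hzero]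
    set u : Fin n → ℝ := (J - B).mulVec s with hu
    set U : ℝ := u ⬝ᵥ u with hU
    have hU_pos : 0 < U := by
      rcases (Finset.sum_nonneg fun k (_ : k ∈ univ) => mul_self_nonneg (u k)).lt_or_eq with h | h
      · exact h
      · exact absurd (dotProduct_self_eq_zero.mp h.symm) hzero
    have hui : ∀ k, u k = -(w i k) := by
      intro k
      rw [hu, hsi]
      simp [Matrix.mulVec_single, hw, Matrix.sub_apply]
    set d : Fin n → ℝ := fun j => u ⬝ᵥ w j with hd
    set M : Matrix (Fin n) (Fin n) ℝ := (B - J) + U⁻¹ • (Matrix.vecMulVec u u * (J - B)) with hM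
    have hident : B + U⁻¹ • (Matrix.vecMulVec u u * (J - B)) - A = M + (J - A) := by
      rw [hM]; abel
    -- entries of M
    have hMentry : ∀ k j, M k j = w j k - U⁻¹ * (u k * d j) := by
      intro k j
      simp only [hM, Matrix.add_apply, Matrix.smul_apply, Matrix.mul_apply,
        Matrix.vecMulVec_apply, smul_eq_mul]
      have h1 : ∑ l, u k * u l * (J - B) l j = -(u k * d j) := by
        rw [hd]
        simp only [dotProduct, Finset.mul_sum, ← Finset.sum_neg_distrib]
        apply Finset.sum_congr rfl
        intro l _
        simp only [hw, Matrix.sub_apply]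
        ring
      rw [h1]
      simp only [hw, Matrix.sub_apply]
      ring
    have hq : ∀ j, (∑ k, (M k j) ^ 2) = Sw j - (d j) ^ 2 / U := by
      intro j
      have expand : ∀ k, (M k j) ^ 2 =
          (w j k) ^ 2 - (2 * U⁻¹ * d j) * (u k * w j k) + (U⁻¹ * d j) ^ 2 * (u k) ^ 2 := by
        intro k; rw [hMentry k j]; ring
      rw [Finset.sum_congr rfl fun k _ => expand k, Finset.sum_add_distrib,
        Finset.sum_sub_distrib, ← Finset.mul_sum, ← Finset.mul_sum]
      have h1 : ∑ k, u k * w j k = d j := rfl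
      have h2 : ∑ k, (u k) ^ 2 = U := by
        rw [hU]; simp [dotProduct, sq]
      rw [h1, h2]
      field_simp
      ring
    have hq_le : ∀ j, (∑ k, (M k j) ^ 2) ≤ Sw j := by
      intro j
      rw [hq j]
      have : 0 ≤ (d j) ^ 2 / U := div_nonneg (sq_nonneg _) hU_pos.le
      linarith
    have hUSwi : U = Sw i := by
      rw [hU, hSw]
      simp only [dotProduct]
      apply Finset.sum_congr rfl
      intro k _
      rw [hui k]; ring
    have hdi : d i = -Sw i := by
      rw [hd]
      simp only [dotProduct]
      rw [hSw, ← Finset.sum_neg_distrib]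
      apply Finset.sum_congr rfl
      intro k _
      rw [hui k]; ring
    have hqi : (∑ k, (M k i) ^ 2) = 0 := by
      rw [hq i, hdi, hUSwi]
      have h0 : Sw i ≠ 0 := by rw [← hUSwi]; exact hU_pos.ne'
      field_simp
      ring
    -- sum over all columns
    have hScard : S ≤ n * Sw i := by
      calc S = ∑ j, Sw j := hSdef
        _ ≤ ∑ _j : Fin n, Sw i := Finset.sum_le_sum fun j _ => hgreedy j
        _ = n * Sw i := by simp [Finset.card_fin, mul_comm]
    have hsumq : ∑ j, ∑ k, (M k j) ^ 2 ≤ (1 - 1/(n:ℝ)) * S := by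
      have h0 : ∑ j, ∑ k, (M k j) ^ 2 = ∑ j ∈ univ.erase i, ∑ k, (M k j) ^ 2 := by
        rw [← Finset.sum_erase_add univ _ (mem_univ i), hqi, add_zero]
      have h1 : ∑ j ∈ univ.erase i, ∑ k, (M k j) ^ 2 ≤ ∑ j ∈ univ.erase i, Sw j :=
        Finset.sum_le_sum fun j _ => hq_le j
      have h2 : ∑ j ∈ univ.erase i, Sw j = S - Sw i := by
        have := Finset.sum_erase_add univ Sw (mem_univ i)
        rw [hSdef]; linarith
      have hn0 : (0:ℝ) < n := by linarith
      have h3 : S / n ≤ Sw i := by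
        rw [div_le_iff₀ hn0]
        nlinarith
      have : (1 - 1/(n:ℝ)) * S = S - S / n := by field_simp
      rw [this]
      linarith [h0, h1, h2, h3]
    have hfrobM : frob M ≤ (1 - 1/(2*(n:ℝ))) * Real.sqrt S := by
      have hfM : frob M = Real.sqrt (∑ j, ∑ k, (M k j) ^ 2) := by
        unfold frob; rw [Finset.sum_comm]
      rw [hfM]
      have key : ∑ j, ∑ k, (M k j) ^ 2 ≤ ((1 - 1/(2*(n:ℝ))) * Real.sqrt S) ^ 2 := by
        have : ((1 - 1/(2*(n:ℝ))) * Real.sqrt S) ^ 2 = (1 - 1/(2*(n:ℝ)))^2 * S := by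
          rw [mul_pow, Real.sq_sqrt hS_nonneg]
        rw [this]
        have hsq : (1 - 1/(n:ℝ)) ≤ (1 - 1/(2*(n:ℝ)))^2 := by
          have hn0 : (0:ℝ) < n := by linarith
          have expand : (1 - 1/(2*(n:ℝ)))^2 = 1 - 1/(n:ℝ) + (1/(2*(n:ℝ)))^2 := by
            field_simp; ring
          nlinarith [sq_nonneg (1/(2*(n:ℝ)))]
        nlinarith [hsumq, hS_nonneg]
      calc Real.sqrt (∑ j, ∑ k, (M k j) ^ 2) ≤
          Real.sqrt (((1 - 1/(2*(n:ℝ))) * Real.sqrt S) ^ 2) := Real.sqrt_le_sqrt key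
        _ = (1 - 1/(2*(n:ℝ))) * Real.sqrt S :=
            Real.sqrt_sq (mul_nonneg hc (Real.sqrt_nonneg _))
    -- combine
    rw [hident]
    have htri : frob (M + (J - A)) ≤ frob M + frob (J - A) := frob_add_le _ _
    have hBJle : Real.sqrt S ≤ frob (B - A) + frob (J - A) := by
      rw [← hfrobBJ]
      have h := frob_sub_le B A J
      have h2 : frob (A - J) = frob (J - A) := by
        rw [← frob_neg (A - J), neg_sub]
      linarith
    have hfinal : (1 - 1/(2*(n:ℝ))) * Real.sqrt S ≤
        (1 - 1/(2*(n:ℝ))) * (frob (B - A) + frob (J - A)) :=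
      mul_le_mul_of_nonneg_left hBJle hc
    have := frob_nonneg (J - A)
    linarith
end

section
/- Let matrices B_k, …, B_{k+n} and J_k, …, J_{k+n−1} in ℝ^{n×n} and vectors s_k, …, s_{k+n−1} satisfy B_{t+1} = AAA(B_t, J_t, s_t) for k ≤ t ≤ k+n−1, where the set {s_k, …, s_{k+n−1}} equals the standard basis {e_1, …, e_n} of ℝⁿ (all n directions pairwise distinct basis vectors). Then for any matrix A ∈ ℝ^{n×n}, ‖B_{k+n} − A‖_F ≤ √n · Σ_{t=k}^{k+n−1} ‖J_t − A‖_F. -/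
open Matrix MeasureTheory ProbabilityTheory Finset

/-!
Work column by column. With `u = (J - B) s`, the update sends the column `x = (B - A) v` of
`B - A` to `x + P (y - x)`, where `y = (J - A) v` and `P` is the orthogonal projection onto
`ℝ u`; as `x + P (y - x) = P^⊥ x + P y`, one step adds at most `‖(J - A) v‖` to the column norm.
The update also forces `B s = J s`, so once the direction `e_j` has been used, column `j` of
`B - A` is bounded by the sum of the `‖(J_t - A) e_j‖ ≤ ‖J_t - A‖_F` from that step on.
Combining the `n` column bounds gives the factor `√n`.
-/

lemma Submodule.norm_add_starProjection_sub_le {𝕜 E : Type*} [RCLike 𝕜] [NormedAddCommGroup E]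
    [InnerProductSpace 𝕜 E] (K : Submodule 𝕜 E) [K.HasOrthogonalProjection] (x y : E) :
    ‖x + K.starProjection (y - x)‖ ≤ ‖x‖ + ‖y‖ := by
  have h : x + K.starProjection (y - x) = Kᗮ.starProjection x + K.starProjection y := by
    rw [map_sub, K.starProjection_orthogonal']
    simp only [_root_.sub_apply, one_apply_eq_self]
    abel
  rw [h]
  exact (norm_add_le _ _).trans
    (add_le_add (Kᗮ.norm_starProjection_apply_le x) (K.norm_starProjection_apply_le y))

section

variable {n : ℕ}

lemma enorm'_eq_norm_toLp (v : Fin n → ℝ) :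
    enorm' v = ‖(WithLp.toLp 2 v : EuclideanSpace ℝ (Fin n))‖ := by
  simp only [enorm', EuclideanSpace.norm_eq, Real.norm_eq_abs, sq_abs]

lemma frob_eq_sqrt_sum_enorm'_sq (M : Matrix (Fin n) (Fin n) ℝ) :
    frob M = √(∑ j, enorm' (M *ᵥ Pi.single j 1) ^ 2) := by
  simp only [frob, enorm', mulVec_single_one, col_apply,
    Real.sq_sqrt (Finset.sum_nonneg fun _ _ => sq_nonneg _)]
  rw [Finset.sum_comm]

lemma enorm'_mulVec_single_le_frob (M : Matrix (Fin n) (Fin n) ℝ) (j : Fin n) :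
    enorm' (M *ᵥ Pi.single j 1) ≤ frob M := by
  rw [frob_eq_sqrt_sum_enorm'_sq]
  exact Real.le_sqrt_of_sq_le <|
    Finset.single_le_sum (f := fun j => enorm' (M *ᵥ Pi.single j 1) ^ 2)
      (fun _ _ => sq_nonneg _) (Finset.mem_univ j)

lemma frob_le_sqrt_mul_of_enorm'_mulVec_single_le (M : Matrix (Fin n) (Fin n) ℝ)
    {c : ℝ} (hc : 0 ≤ c) (hM : ∀ j, enorm' (M *ᵥ Pi.single j 1) ≤ c) :
    frob M ≤ √n * c := by
  calc frob M ≤ √(∑ _j : Fin n, c ^ 2) := by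
        rw [frob_eq_sqrt_sum_enorm'_sq]
        gcongr with j
        · exact Real.sqrt_nonneg _
        · exact hM j
    _ = √n * c := by
        rw [Finset.sum_const, Finset.card_univ, Fintype.card_fin, nsmul_eq_mul,
          Real.sqrt_mul (Nat.cast_nonneg n), Real.sqrt_sq hc]

-- Also valid in the degenerate branch `(J - B) *ᵥ s = 0`, where the term added is `0 • 0`.
lemma AAAupd_mulVec (B J : Matrix (Fin n) (Fin n) ℝ) (s v : Fin n → ℝ) :
    AAAupd B J s *ᵥ v = B *ᵥ v +
      (((J - B) *ᵥ s ⬝ᵥ (J - B) *ᵥ v) / ((J - B) *ᵥ s ⬝ᵥ (J - B) *ᵥ s)) • (J - B) *ᵥ s := by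
  unfold AAAupd
  split_ifs with h
  · simp [h]
  · rw [add_mulVec, smul_mulVec, ← mulVec_mulVec, vecMulVec_mulVec, op_smul_eq_smul, smul_smul,
      inv_mul_eq_div]

lemma AAAupd_mulVec_self (B J : Matrix (Fin n) (Fin n) ℝ) (s : Fin n → ℝ) :
    AAAupd B J s *ᵥ s = J *ᵥ s := by
  rw [AAAupd_mulVec]
  by_cases h : (J - B) *ᵥ s = 0
  · rw [h, smul_zero, add_zero, eq_comm, ← sub_eq_zero, ← sub_mulVec, h]
  · rw [div_self (dotProduct_self_eq_zero.not.mpr h), one_smul, sub_mulVec]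
    abel

lemma toLp_AAAupd_sub_mulVec (B J A : Matrix (Fin n) (Fin n) ℝ) (s v : Fin n → ℝ) :
    WithLp.toLp 2 ((AAAupd B J s - A) *ᵥ v) =
      WithLp.toLp 2 ((B - A) *ᵥ v) + (ℝ ∙ WithLp.toLp 2 ((J - B) *ᵥ s)).starProjection
        (WithLp.toLp 2 ((J - A) *ᵥ v) - WithLp.toLp 2 ((B - A) *ᵥ v)) := by
  have hdiff : (J - A) *ᵥ v - (B - A) *ᵥ v = (J - B) *ᵥ v := by
    simp only [sub_mulVec]; abel
  rw [Submodule.starProjection_singleton, ← real_inner_self_eq_norm_sq, ← WithLp.toLp_sub,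
    EuclideanSpace.inner_toLp_toLp, EuclideanSpace.inner_toLp_toLp, hdiff, star_trivial,
    dotProduct_comm ((J - B) *ᵥ v), RCLike.ofReal_real_eq_id, id, ← WithLp.toLp_smul,
    ← WithLp.toLp_add, sub_mulVec, sub_mulVec, AAAupd_mulVec]
  abel_nf

lemma enorm'_AAAupd_sub_mulVec_le (B J A : Matrix (Fin n) (Fin n) ℝ) (s v : Fin n → ℝ) :
    enorm' ((AAAupd B J s - A) *ᵥ v) ≤ enorm' ((B - A) *ᵥ v) + enorm' ((J - A) *ᵥ v) := by
  simp only [enorm'_eq_norm_toLp, toLp_AAAupd_sub_mulVec]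
  exact Submodule.norm_add_starProjection_sub_le _ _ _

lemma enorm'_sub_mulVec_le_sum_of_AAAupd {B J : ℕ → Matrix (Fin n) (Fin n) ℝ}
    {s : ℕ → Fin n → ℝ} {a b : ℕ} (hab : a < b)
    (hupd : ∀ t, a ≤ t → t < b → B (t + 1) = AAAupd (B t) (J t) (s t))
    (A : Matrix (Fin n) (Fin n) ℝ) :
    enorm' ((B b - A) *ᵥ s a) ≤ ∑ t ∈ Finset.Ico a b, enorm' ((J t - A) *ᵥ s a) := by
  induction b, hab using Nat.le_induction with
  | base =>
    rw [Nat.Ico_succ_singleton, Finset.sum_singleton, sub_mulVec, sub_mulVec,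
      hupd a le_rfl a.lt_succ_self, AAAupd_mulVec_self]
  | succ b hab ih =>
    have hab : a ≤ b := Nat.le_of_succ_le hab
    rw [Finset.sum_Ico_succ_top hab, hupd b hab b.lt_succ_self]
    exact (enorm'_AAAupd_sub_mulVec_le _ _ _ _ _).trans
      (add_le_add_left (ih fun t ht htb => hupd t ht (htb.trans b.lt_succ_self)) _)

end

theorem stmt_18_general {n : ℕ} (B Jm : ℕ → Matrix (Fin n) (Fin n) ℝ) (s : ℕ → Fin n → ℝ)
    (k : ℕ)
    (hupd : ∀ t, k ≤ t → t < k + n → B (t + 1) = AAAupd (B t) (Jm t) (s t))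
    (hall : ∀ j : Fin n, ∃ t, k ≤ t ∧ t < k + n ∧ s t = Pi.single j 1)
    (A : Matrix (Fin n) (Fin n) ℝ) :
    frob (B (k + n) - A) ≤
      Real.sqrt n * ∑ t ∈ Finset.Ico k (k + n), frob (Jm t - A) := by
  refine frob_le_sqrt_mul_of_enorm'_mulVec_single_le _
    (Finset.sum_nonneg fun _ _ => Real.sqrt_nonneg _) fun j => ?_
  obtain ⟨t₀, hkt₀, ht₀, hst₀⟩ := hall j
  calc enorm' ((B (k + n) - A) *ᵥ Pi.single j 1)
      ≤ ∑ t ∈ Finset.Ico t₀ (k + n), enorm' ((Jm t - A) *ᵥ Pi.single j 1) := by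
        rw [← hst₀]
        exact enorm'_sub_mulVec_le_sum_of_AAAupd ht₀
          (fun t ht htn => hupd t (hkt₀.trans ht) htn) A
    _ ≤ ∑ t ∈ Finset.Ico t₀ (k + n), frob (Jm t - A) :=
        Finset.sum_le_sum fun t _ => enorm'_mulVec_single_le_frob _ j
    _ ≤ ∑ t ∈ Finset.Ico k (k + n), frob (Jm t - A) :=
        Finset.sum_le_sum_of_subset_of_nonneg (Finset.Ico_subset_Ico_left hkt₀)
          fun _ _ _ => Real.sqrt_nonneg _

theorem stmt_18 {n : ℕ} (B Jm : ℕ → Matrix (Fin n) (Fin n) ℝ) (s : ℕ → Fin n → ℝ)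
    (k : ℕ)
    (hupd : ∀ t, k ≤ t → t < k + n → B (t + 1) = AAAupd (B t) (Jm t) (s t))
    (hbasis : ∀ t, k ≤ t → t < k + n → ∃ j : Fin n, s t = Pi.single j 1)
    (hall : ∀ j : Fin n, ∃ t, k ≤ t ∧ t < k + n ∧ s t = Pi.single j 1)
    (A : Matrix (Fin n) (Fin n) ℝ) :
    frob (B (k + n) - A) ≤
      Real.sqrt n * ∑ t ∈ Finset.Ico k (k + n), frob (Jm t - A) :=
  stmt_18_general B Jm s k hupd hall A
end
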